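/- Let I be a finite nonempty index type and n : I → ℕ with n i ≥ 1 for all i, and let M = Π_{i ∈ I} M_{n i}(ℂ) be the product algebra of matrix algebras, with componentwise operations and componentwise star. Let B : M → M → ℂ be ℂ-bilinear and assume: (i) B 1 1 = 1; (ii) for every finite index type ι and all families x, y : ι → M, the complex number Σ_{j,k} B (star (x j) * (x k)) ((y k) * star (y j)) is a nonnegative real number; (iii) B p (1 - p) = 0 for every projection p ∈ M (i.e. every p with star p = p and p * p = p). Then there exists c : I → ℝ with c i ≥ 0 for all i and Σ_i c i = 1, such that B x y = Σ_i (c i) * trace((x i) * (y i)) / (n i) for all x, y ∈ M. -/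

import Mathlib

/-!
Positivity on `M ⊗ Mᵒᵖ` yields a Cauchy–Schwarz inequality, so `B p (1 - p) = 0` forces
`B (x p) ((1 - p) y) = 0` and `B (p x) (y (1 - p)) = 0` for every projection `p`. Hence
projections can be moved across `B`: `B (x p) y = B x (p y)` and `B (p x) y = B x (y p)`. The
elements with this property form a subalgebra; it contains all projections, hence all matrix
units, hence everything. So `B x y = φ (x y)` for the tracial functional `φ = B · 1`, which is
`w i • trace` on the `i`-th block; positivity gives `w i ≥ 0` and `B 1 1 = 1` gives
`∑ i, w i * n i = 1`.
-/

open scoped ComplexOrder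

theorem Complex.eq_zero_of_forall_nonneg_mul_add_sq_mul {w d : ℂ}
    (h : ∀ s : ℝ, 0 ≤ s * w + s ^ 2 * d) : w = 0 := by
  have hre : w.re ^ 2 ≤ 0 := by
    have := discrim_le_zero (c := 0) fun s : ℝ => by
      simpa [sq, add_comm, mul_comm] using (Complex.nonneg_iff.1 (h s)).1
    simpa [discrim, sq] using this
  have him₁ := (Complex.nonneg_iff.1 (h 1)).2
  have him₂ := (Complex.nonneg_iff.1 (h (-1))).2
  simp only [Complex.ofReal_one, Complex.ofReal_neg, one_pow, neg_one_sq, one_mul, neg_one_mul,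
    Complex.add_im, Complex.neg_im] at him₁ him₂
  exact Complex.ext (pow_eq_zero_iff two_ne_zero |>.1 (le_antisymm hre (sq_nonneg _)))
    (by rw [Complex.zero_im]; linarith)

namespace Matrix

variable {m R : Type*} [Fintype m] [DecidableEq m]

theorem isStarProjection_single_same [Semiring R] [StarRing R] (a : m) :
    IsStarProjection (single a a (1 : R)) :=
  ⟨by simp [IsIdempotentElem],
   by simp [IsSelfAdjoint, star_eq_conjTranspose, conjTranspose_single]⟩

theorem isStarProjection_inv_two_smul_single_add [Field R] [StarRing R] [NeZero (2 : R)]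
    {a b : m} (hab : a ≠ b) :
    IsStarProjection
      ((2⁻¹ : R) • (single a a 1 + single a b 1 + single b a 1 + single b b (1 : R))) := by
  set s := single a a (1 : R) + single a b 1 + single b a 1 + single b b 1
  have hs : s * s = (2 : R) • s := by
    simp only [s, add_mul, mul_add, single_mul_single_same, mul_one, single_mul_single_of_ne,
      ne_eq, hab, Ne.symm hab, not_false_eq_true, add_zero, zero_add]
    rw [two_smul]
    abel
  have hstar : star s = s := by
    simp only [s, star_add, star_eq_conjTranspose, conjTranspose_single, star_one]
    abel
  constructor
  · rw [IsIdempotentElem, smul_mul_smul_comm, hs, smul_smul, mul_assoc,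
      inv_mul_cancel₀ two_ne_zero, mul_one]
  · rw [IsSelfAdjoint, star_smul, hstar, star_inv₀, star_ofNat]

theorem apply_eq_mul_trace_of_apply_mul_comm [CommSemiring R] (f : Matrix m m R →ₗ[R] R)
    (hf : ∀ x y, f (x * y) = f (y * x)) (o : m) (z : Matrix m m R) :
    f z = f (single o o 1) * z.trace := by
  induction z using Matrix.induction_on' with
  | h_zero => simp
  | h_add p q hp hq => rw [map_add, hp, hq, trace_add, mul_add]
  | h_std_basis a b c =>
    have hswap : f (single a b c) = f (single o b c * single a o 1) := by
      rw [← hf, single_mul_single_same, one_mul]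
    rw [hswap]
    obtain rfl | hab := eq_or_ne a b
    · have hc : single o o c = c • single o o (1 : R) := by
        rw [smul_single, smul_eq_mul, mul_one]
      rw [single_mul_single_same, mul_one, hc, map_smul, smul_eq_mul, trace_single_eq_same,
        mul_comm]
    · rw [single_mul_single_of_ne (h := hab.symm), map_zero, trace_single_eq_of_ne _ _ _ hab,
        mul_zero]

end Matrix

theorem IsStarProjection.pi_single {ι : Type*} [DecidableEq ι] {A : ι → Type*}
    [∀ i, NonUnitalNonAssocSemiring (A i)] [∀ i, StarAddMonoid (A i)] {i : ι} {p : A i}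
    (hp : IsStarProjection p) : IsStarProjection (Pi.single i p) :=
  ⟨by rw [IsIdempotentElem, ← Pi.single_mul, hp.isIdempotentElem.eq],
   by rw [IsSelfAdjoint, ← Pi.single_star, hp.isSelfAdjoint.star_eq]⟩

section PiMatrix

variable {ι R : Type*} [Fintype ι] [DecidableEq ι] {m : ι → Type*} [∀ i, Fintype (m i)]
  [∀ i, DecidableEq (m i)]

open Matrix

theorem Matrix.pi_subalgebra_eq_top_of_isStarProjection_mem [Field R] [StarRing R] [NeZero (2 : R)]
    {S : Subalgebra R (∀ i, Matrix (m i) (m i) R)} (h : ∀ p, IsStarProjection p → p ∈ S) :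
    S = ⊤ := by
  have hsingle : ∀ i (a b : m i), Pi.single i (single a b (1 : R)) ∈ S := by
    intro i a b
    obtain rfl | hab := eq_or_ne a b
    · exact h _ (isStarProjection_single_same a).pi_single
    · have hq := h _ (isStarProjection_inv_two_smul_single_add (R := R) hab).pi_single
      have hsingle_ab : single a b (1 : R) = single a a 1 * ((2 : R) • (2⁻¹ : R) •
          (single a a 1 + single a b 1 + single b a 1 + single b b 1)) - single a a 1 := by
        rw [smul_smul, mul_inv_cancel₀ two_ne_zero, one_smul]
        simp [mul_add, hab]
      rw [hsingle_ab, Pi.single_sub, Pi.single_mul, Pi.single_smul]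
      exact sub_mem (mul_mem (h _ (isStarProjection_single_same a).pi_single)
        (S.smul_mem hq 2)) (h _ (isStarProjection_single_same a).pi_single)
  rw [← Algebra.toSubmodule_eq_top, eq_top_iff,
    ← (Pi.basis fun i => Matrix.stdBasis R (m i) (m i)).span_eq, Submodule.span_le]
  rintro _ ⟨⟨i, a, b⟩, rfl⟩
  simpa [Pi.basis_apply, stdBasis_eq_single] using hsingle i a b

theorem Matrix.pi_apply_eq_sum_mul_trace [CommSemiring R]
    (f : (∀ i, Matrix (m i) (m i) R) →ₗ[R] R) (hf : ∀ x y, f (x * y) = f (y * x))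
    (o : ∀ i, m i) (z : ∀ i, Matrix (m i) (m i) R) :
    f z = ∑ i, f (Pi.single i (single (o i) (o i) 1)) * (z i).trace := by
  conv_lhs => rw [← Finset.univ_sum_single z]
  rw [map_sum]
  refine Finset.sum_congr rfl fun i _ => ?_
  exact apply_eq_mul_trace_of_apply_mul_comm
    (f ∘ₗ LinearMap.single R (fun i => Matrix (m i) (m i) R) i)
    (fun x y => by simp only [LinearMap.comp_apply, LinearMap.coe_single, Pi.single_mul, hf])
    (o i) (z i)

end PiMatrix

section Balanced

variable {R A : Type*} [CommRing R] [Ring A] [Algebra R A]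

/-- Reading `B` as a functional on `A ⊗ Aᵒᵖ`, these are the `z` with `x z ⊗ y ≡ x ⊗ z y`
and `z x ⊗ y ≡ x ⊗ y z` modulo its kernel. -/
def balancedSubalgebra (B : A →ₗ[R] A →ₗ[R] R) : Subalgebra R A where
  carrier := {z | ∀ x y, B (x * z) y = B x (z * y) ∧ B (z * x) y = B x (y * z)}
  mul_mem' {z₁ z₂} h₁ h₂ x y :=
    ⟨by rw [← mul_assoc, (h₂ _ _).1, (h₁ _ _).1, mul_assoc],
     by rw [mul_assoc, (h₁ _ _).2, (h₂ _ _).2, mul_assoc]⟩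
  add_mem' h₁ h₂ x y :=
    ⟨by simp only [mul_add, add_mul, map_add, LinearMap.add_apply, (h₁ x y).1, (h₂ x y).1],
     by simp only [mul_add, add_mul, map_add, LinearMap.add_apply, (h₁ x y).2, (h₂ x y).2]⟩
  algebraMap_mem' c x y := by simp [Algebra.algebraMap_eq_smul_one]

variable {B : A →ₗ[R] A →ₗ[R] R}

theorem mem_balancedSubalgebra {z : A} : z ∈ balancedSubalgebra B ↔
    ∀ x y, B (x * z) y = B x (z * y) ∧ B (z * x) y = B x (y * z) :=
  Iff.rfl

theorem apply_eq_flip_one_mul (h : balancedSubalgebra B = ⊤) (x y : A) :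
    B x y = B.flip 1 (x * y) := by
  have hy : y ∈ balancedSubalgebra B := h ▸ Algebra.mem_top
  simpa using ((mem_balancedSubalgebra.1 hy x 1).1).symm

theorem flip_one_mul_comm (h : balancedSubalgebra B = ⊤) (x y : A) :
    B.flip 1 (x * y) = B.flip 1 (y * x) := by
  have hx : x ∈ balancedSubalgebra B := h ▸ Algebra.mem_top
  have hswap := (mem_balancedSubalgebra.1 hx 1 y).2
  rw [mul_one] at hswap
  rw [← apply_eq_flip_one_mul h, hswap, apply_eq_flip_one_mul h, one_mul]

end Balanced

section StarAlgebra

variable {A : Type*} [Ring A] [StarRing A] [Algebra ℂ A]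

/-- Positivity of `x ⊗ op y ↦ B x y` on `A ⊗ Aᵒᵖ`, evaluated at `z⋆ z` for
`z = ∑ j, x j ⊗ op (y j)`. -/
def TensorOpPositive (B : A →ₗ[ℂ] A →ₗ[ℂ] ℂ) : Prop :=
  ∀ (ι : Type) [Fintype ι] (x y : ι → A),
    0 ≤ ∑ j, ∑ k, B (star (x j) * x k) (y k * star (y j))

namespace TensorOpPositive

variable {B : A →ₗ[ℂ] A →ₗ[ℂ] ℂ}

theorem apply_star_mul_self_nonneg (hB : TensorOpPositive B) (v w : A) :
    0 ≤ B (star v * v) (w * star w) := by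
  simpa using hB Unit (fun _ => v) (fun _ => w)

theorem quadratic_nonneg [StarModule ℂ A] (hB : TensorOpPositive B) (v w x y : A) (t : ℂ) :
    0 ≤ B (star v * v) (w * star w) + t * B (star v * x) (y * star w)
      + starRingEnd ℂ t * B (star x * v) (w * star y)
      + t * starRingEnd ℂ t * B (star x * x) (y * star y) := by
  have h := hB (Fin 2) ![v, t • x] ![w, y]
  simp only [Fin.sum_univ_two, Matrix.cons_val_zero, Matrix.cons_val_one, star_smul,
    smul_mul_assoc, mul_smul_comm, map_smul, LinearMap.smul_apply, smul_eq_mul,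
    Complex.star_def] at h
  exact h.trans_eq (by ring)

theorem apply_eq_zero_of_apply_eq_zero [StarModule ℂ A] (hB : TensorOpPositive B) {v w : A}
    (h : B (star v * v) (w * star w) = 0) (x y : A) :
    B (star v * x) (y * star w) = 0 ∧ B (star x * v) (w * star y) = 0 := by
  -- test the form on `v ⊗ w + t (x ⊗ y)` for real and for imaginary `t`
  have hsum := Complex.eq_zero_of_forall_nonneg_mul_add_sq_mul
    (w := B (star v * x) (y * star w) + B (star x * v) (w * star y))
    (d := B (star x * x) (y * star y))
    fun s => (hB.quadratic_nonneg v w x y s).trans_eq (by simp [h]; ring)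
  have hdiff := Complex.eq_zero_of_forall_nonneg_mul_add_sq_mul
    (w := Complex.I * (B (star v * x) (y * star w) - B (star x * v) (w * star y)))
    (d := B (star x * x) (y * star y))
    fun s => (hB.quadratic_nonneg v w x y (s * Complex.I)).trans_eq
      (by simp only [h, map_mul, Complex.conj_ofReal, Complex.conj_I]; ring_nf; simp)
  rw [mul_eq_zero, or_iff_right Complex.I_ne_zero] at hdiff
  constructor
  · linear_combination (hsum + hdiff) / 2
  · linear_combination (hsum - hdiff) / 2

theorem apply_mul_eq_zero_of_isStarProjection [StarModule ℂ A] (hB : TensorOpPositive B)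
    {p : A} (hp : IsStarProjection p) (hp₀ : B p (1 - p) = 0) (x y : A) :
    B (x * p) ((1 - p) * y) = 0 ∧ B (p * x) (y * (1 - p)) = 0 := by
  have h : B (star p * p) ((1 - p) * star (1 - p)) = 0 := by
    rw [hp.isSelfAdjoint.star_eq, hp.isIdempotentElem.eq, hp.one_sub.isSelfAdjoint.star_eq,
      hp.one_sub.isIdempotentElem.eq, hp₀]
  obtain ⟨-, h₁⟩ := hB.apply_eq_zero_of_apply_eq_zero h (star x) (star y)
  obtain ⟨h₂, -⟩ := hB.apply_eq_zero_of_apply_eq_zero h x y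
  simp only [star_star, hp.isSelfAdjoint.star_eq, hp.one_sub.isSelfAdjoint.star_eq] at h₁ h₂
  exact ⟨h₁, h₂⟩

end TensorOpPositive

theorem TensorOpPositive.isStarProjection_mem_balancedSubalgebra [StarModule ℂ A]
    (hB : TensorOpPositive B) (hdiag : ∀ p : A, IsStarProjection p → B p (1 - p) = 0)
    {p : A} (hp : IsStarProjection p) : p ∈ balancedSubalgebra B := by
  refine mem_balancedSubalgebra.2 fun x y => ?_
  have h := hB.apply_mul_eq_zero_of_isStarProjection hp (hdiag p hp) x y
  have h' := hB.apply_mul_eq_zero_of_isStarProjection hp.one_sub (hdiag _ hp.one_sub) x y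
  rw [sub_sub_cancel] at h'
  constructor
  · calc B (x * p) y = B (x * p) (p * y) + B (x * p) ((1 - p) * y) := by
          rw [← map_add, ← add_mul, add_sub_cancel, one_mul]
      _ = B (x * p) (p * y) + B (x * (1 - p)) (p * y) := by rw [h.1, h'.1]
      _ = B x (p * y) := by
          rw [← LinearMap.add_apply, ← map_add, ← mul_add, add_sub_cancel, mul_one]
  · calc B (p * x) y = B (p * x) (y * p) + B (p * x) (y * (1 - p)) := by
          rw [← map_add, ← mul_add, add_sub_cancel, mul_one]
      _ = B (p * x) (y * p) + B ((1 - p) * x) (y * p) := by rw [h.2, h'.2]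
      _ = B x (y * p) := by
          rw [← LinearMap.add_apply, ← map_add, ← add_mul, add_sub_cancel, one_mul]

end StarAlgebra

theorem diagonal_state_on_product_of_matrix_factors_general
    (I : Type*) [Fintype I] (n : I → ℕ) (hn : ∀ i, 1 ≤ n i)
    (B : (∀ i, Matrix (Fin (n i)) (Fin (n i)) ℂ) →ₗ[ℂ]
         (∀ i, Matrix (Fin (n i)) (Fin (n i)) ℂ) →ₗ[ℂ] ℂ)
    (hunit : B 1 1 = 1)
    (hpos : ∀ (ι : Type) [Fintype ι]
      (x y : ι → (∀ i, Matrix (Fin (n i)) (Fin (n i)) ℂ)),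
      0 ≤ ∑ j, ∑ k, B (star (x j) * (x k)) ((y k) * star (y j)))
    (hdiag : ∀ p : (∀ i, Matrix (Fin (n i)) (Fin (n i)) ℂ),
      star p = p → p * p = p → B p (1 - p) = 0) :
    ∃ c : I → ℝ, (∀ i, 0 ≤ c i) ∧ (∑ i, c i) = 1 ∧
      ∀ x y : (∀ i, Matrix (Fin (n i)) (Fin (n i)) ℂ),
        B x y = ∑ i, (c i : ℂ) * ((x i) * (y i)).trace / (n i : ℂ) := by
  classical
  have hpos : TensorOpPositive B := hpos
  have hbal : balancedSubalgebra B = ⊤ := 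
    Matrix.pi_subalgebra_eq_top_of_isStarProjection_mem fun p hp =>
    hpos.isStarProjection_mem_balancedSubalgebra
      (fun q hq => hdiag q hq.isSelfAdjoint hq.isIdempotentElem) hp
  let E i : ∀ i, Matrix (Fin (n i)) (Fin (n i)) ℂ :=
    Pi.single i (Matrix.single ⟨0, hn i⟩ ⟨0, hn i⟩ 1)
  have htrace : ∀ z, B.flip 1 z = ∑ i, B.flip 1 (E i) * (z i).trace :=
    Matrix.pi_apply_eq_sum_mul_trace _ (flip_one_mul_comm hbal) _
  have hE : ∀ i, 0 ≤ B.flip 1 (E i) := fun i => by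
    have hEi : IsStarProjection (E i) := (Matrix.isStarProjection_single_same _).pi_single
    have := hpos.apply_star_mul_self_nonneg (E i) 1
    rwa [hEi.isSelfAdjoint.star_eq, hEi.isIdempotentElem.eq, one_mul, star_one] at this
  choose w hw₀ hw using fun i => RCLike.nonneg_iff_exists_ofReal.1 (hE i)
  simp only [← hw] at htrace
  refine ⟨fun i => w i * n i, fun i => mul_nonneg (hw₀ i) (Nat.cast_nonneg _), ?_,
    fun x y => ?_⟩
  · rw [apply_eq_flip_one_mul hbal, htrace] at hunit
    simp only [Pi.one_apply, mul_one, Matrix.trace_one, Fintype.card_fin] at hunit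
    apply Complex.ofReal_injective
    push_cast
    exact hunit
  · rw [apply_eq_flip_one_mul hbal, htrace]
    refine Finset.sum_congr rfl fun i _ => ?_
    have hn₀ : (n i : ℂ) ≠ 0 := Nat.cast_ne_zero.2 (Nat.one_le_iff_ne_zero.1 (hn i))
    push_cast
    rw [mul_right_comm, mul_div_cancel_right₀ _ hn₀]
    rfl

theorem diagonal_state_on_product_of_matrix_factors
    (I : Type*) [Fintype I] [Nonempty I] (n : I → ℕ) (hn : ∀ i, 1 ≤ n i)
    (B : (∀ i, Matrix (Fin (n i)) (Fin (n i)) ℂ) →ₗ[ℂ]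
         (∀ i, Matrix (Fin (n i)) (Fin (n i)) ℂ) →ₗ[ℂ] ℂ)
    (hunit : B 1 1 = 1)
    (hpos : ∀ (ι : Type) [Fintype ι]
      (x y : ι → (∀ i, Matrix (Fin (n i)) (Fin (n i)) ℂ)),
      0 ≤ ∑ j, ∑ k, B (star (x j) * (x k)) ((y k) * star (y j)))
    (hdiag : ∀ p : (∀ i, Matrix (Fin (n i)) (Fin (n i)) ℂ),
      star p = p → p * p = p → B p (1 - p) = 0) :
    ∃ c : I → ℝ, (∀ i, 0 ≤ c i) ∧ (∑ i, c i) = 1 ∧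
      ∀ x y : (∀ i, Matrix (Fin (n i)) (Fin (n i)) ℂ),
        B x y = ∑ i, (c i : ℂ) * ((x i) * (y i)).trace / (n i : ℂ) :=
  diagonal_state_on_product_of_matrix_factors_general I n hn B hunit hpos hdiag
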